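/- arXiv:1404.0036 — 2 statements merged into one kernel-verified Lean document; each statement's English description precedes it below -/
import Mathlib

section
/- Fix (F1,F2,F3) ∈ ℝ³ and a source (ξ1,ξ2,ξ3) with ξ3 < 0. Then the function Φ_ℬ(x1,x2,x3) = F1·R1/(R+R3) + F2·R2/(R+R3) + F3·log(R+R3), where R1 = x1−ξ1, R2 = x2−ξ2, R3 = −(x3+ξ3), R = sqrt(R1^2+R2^2+R3^2), is smooth and harmonic on the open lower half-space {x3 < 0}; that is, ΔΦ_ℬ = 0 there (note R3 > 0 and R > 0 throughout this region since ξ3 < 0). -/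
open Real

lemma hasDerivAt_R (ξ q : ℝ) (hq : 0 < q) (t : ℝ) :
    HasDerivAt (fun s : ℝ => Real.sqrt ((s-ξ)^2+q)) ((t-ξ)/Real.sqrt ((t-ξ)^2+q)) t := by
  have h0 : (0:ℝ) < (t-ξ)^2+q := by positivity
  have h1 : HasDerivAt (fun s : ℝ => (s-ξ)^2+q) (2*(t-ξ)) t := by
    simpa using (((hasDerivAt_id t).sub_const ξ).pow 2).add_const q
  have h2 := h1.sqrt (ne_of_gt h0)
  convert h2 using 1
  rw [mul_div_mul_left _ _ (two_ne_zero)]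

lemma sliceD1 (G F3 ξ K q c : ℝ) (hq : 0 < q) (hc : 0 < c) (t : ℝ) :
    HasDerivAt (fun s : ℝ => G*(s-ξ)/(Real.sqrt ((s-ξ)^2+q)+c) + K/(Real.sqrt ((s-ξ)^2+q)+c)
        + F3*Real.log (Real.sqrt ((s-ξ)^2+q)+c))
      (G/(Real.sqrt ((t-ξ)^2+q)+c)
        - (G*(t-ξ)+K)*(t-ξ)/(Real.sqrt ((t-ξ)^2+q)*(Real.sqrt ((t-ξ)^2+q)+c)^2)
        + F3*(t-ξ)/(Real.sqrt ((t-ξ)^2+q)*(Real.sqrt ((t-ξ)^2+q)+c))) t := by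
  have hrpos : 0 < Real.sqrt ((t-ξ)^2+q) := Real.sqrt_pos.2 (by positivity)
  have hspos : 0 < Real.sqrt ((t-ξ)^2+q) + c := by linarith
  have hr := hasDerivAt_R ξ q hq t
  have hden : HasDerivAt (fun s : ℝ => Real.sqrt ((s-ξ)^2+q)+c)
      ((t-ξ)/Real.sqrt ((t-ξ)^2+q)) t := hr.add_const c
  have hnum1 : HasDerivAt (fun s : ℝ => G*(s-ξ)) G t := by
    simpa using ((hasDerivAt_id t).sub_const ξ).const_mul G
  have h1 := hnum1.div hden (ne_of_gt hspos)
  have h2 := (hasDerivAt_const t K).div hden (ne_of_gt hspos)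
  have h3 := (hden.log (ne_of_gt hspos)).const_mul F3
  have htot := (h1.add h2).add h3
  refine htot.congr_deriv ?_
  field_simp
  ring

set_option maxHeartbeats 2000000 in
lemma sliceD2 (G F3 ξ K q c : ℝ) (hq : 0 < q) (hc : 0 < c) (x : ℝ) :
    HasDerivAt (fun t : ℝ => G/(Real.sqrt ((t-ξ)^2+q)+c)
        - (G*(t-ξ)+K)*(t-ξ)/(Real.sqrt ((t-ξ)^2+q)*(Real.sqrt ((t-ξ)^2+q)+c)^2)
        + F3*(t-ξ)/(Real.sqrt ((t-ξ)^2+q)*(Real.sqrt ((t-ξ)^2+q)+c)))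
      ((-(3*G*(x-ξ)+K)*Real.sqrt ((x-ξ)^2+q)^2*(Real.sqrt ((x-ξ)^2+q)+c)
          + (G*(x-ξ)+K)*(x-ξ)^2*((Real.sqrt ((x-ξ)^2+q)+c)+2*Real.sqrt ((x-ξ)^2+q))
          + F3*(Real.sqrt ((x-ξ)^2+q)+c)*(Real.sqrt ((x-ξ)^2+q)^2*(Real.sqrt ((x-ξ)^2+q)+c)
              - (x-ξ)^2*((Real.sqrt ((x-ξ)^2+q)+c)+Real.sqrt ((x-ξ)^2+q))))
        /(Real.sqrt ((x-ξ)^2+q)^3*(Real.sqrt ((x-ξ)^2+q)+c)^3)) x := by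
  have hrpos : 0 < Real.sqrt ((x-ξ)^2+q) := Real.sqrt_pos.2 (by positivity)
  have hspos : 0 < Real.sqrt ((x-ξ)^2+q) + c := by linarith
  have hr := hasDerivAt_R ξ q hq x
  have hden : HasDerivAt (fun s : ℝ => Real.sqrt ((s-ξ)^2+q)+c)
      ((x-ξ)/Real.sqrt ((x-ξ)^2+q)) x := hr.add_const c
  have hu : HasDerivAt (fun t : ℝ => t - ξ) 1 x := (hasDerivAt_id x).sub_const ξ
  have hnum2 : HasDerivAt (fun t : ℝ => (G*(t-ξ)+K)*(t-ξ))
      ((G*1)*(x-ξ) + (G*(x-ξ)+K)*1) x := ((hu.const_mul G).add_const K).mul hu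
  have hden2 : HasDerivAt (fun t : ℝ => Real.sqrt ((t-ξ)^2+q)*(Real.sqrt ((t-ξ)^2+q)+c)^2)
      (((x-ξ)/Real.sqrt ((x-ξ)^2+q))*(Real.sqrt ((x-ξ)^2+q)+c)^2
        + Real.sqrt ((x-ξ)^2+q)*(2*(Real.sqrt ((x-ξ)^2+q)+c)^1*((x-ξ)/Real.sqrt ((x-ξ)^2+q)))) x := by
    exact hr.mul (hden.pow 2)
  have hden3 : HasDerivAt (fun t : ℝ => Real.sqrt ((t-ξ)^2+q)*(Real.sqrt ((t-ξ)^2+q)+c))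
      (((x-ξ)/Real.sqrt ((x-ξ)^2+q))*(Real.sqrt ((x-ξ)^2+q)+c)
        + Real.sqrt ((x-ξ)^2+q)*((x-ξ)/Real.sqrt ((x-ξ)^2+q))) x := hr.mul hden
  have hnum3 : HasDerivAt (fun t : ℝ => F3*(t-ξ)) F3 x := by simpa using hu.const_mul F3
  have h1 := (hasDerivAt_const x G).div hden (ne_of_gt hspos)
  have h2 := hnum2.div hden2 (by positivity)
  have h3 := hnum3.div hden3 (by positivity)
  refine ((h1.sub h2).add h3).congr_deriv ?_
  set r := Real.sqrt ((x-ξ)^2+q) with hrdef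
  field_simp
  ring

lemma alg1 (M F3 w r : ℝ) (hr : 0 < r) (hs : 0 < r + w) :
    (0*(r+w) - M*(-w/r + -1))/(r+w)^2 + F3*((-w/r + -1)/(r+w)) = M/(r*(r+w)) - F3/r := by
  field_simp
  ring

lemma alg2 (M F3 w r : ℝ) (hr : 0 < r) (hs : 0 < r + w) :
    (0*(r*(r+w)) - M*(-w/r*(r+w) + r*(-w/r + -1)))/(r*(r+w))^2 - (0*r - F3*(-w/r))/r^2
      = (M - F3*w)/r^3 := by
  field_simp
  ring

lemma hasDerivAt_R3 (ξ3 q : ℝ) (hq : 0 ≤ q) (t : ℝ) (ht : t + ξ3 < 0) :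
    HasDerivAt (fun s : ℝ => Real.sqrt (q+(-(s+ξ3))^2))
      (-(-(t+ξ3))/Real.sqrt (q+(-(t+ξ3))^2)) t := by
  have hw : 0 < -(t+ξ3) := by linarith
  have h0 : (0:ℝ) < q+(-(t+ξ3))^2 := by positivity
  have h1 : HasDerivAt (fun s : ℝ => q+(-(s+ξ3))^2) (2*(-(t+ξ3))*(-1)) t := by
    simpa using ((((hasDerivAt_id t).add_const ξ3).neg).pow 2).const_add q
  have h2 := h1.sqrt (ne_of_gt h0)
  refine h2.congr_deriv ?_
  have hrpos : 0 < Real.sqrt (q+(-(t+ξ3))^2) := Real.sqrt_pos.2 h0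
  field_simp

lemma slice3D1 (M F3 ξ3 q : ℝ) (hq : 0 ≤ q) (t : ℝ) (ht : t + ξ3 < 0) :
    HasDerivAt (fun s : ℝ => M/(Real.sqrt (q+(-(s+ξ3))^2) + -(s+ξ3))
        + F3*Real.log (Real.sqrt (q+(-(s+ξ3))^2) + -(s+ξ3)))
      (M/(Real.sqrt (q+(-(t+ξ3))^2)*(Real.sqrt (q+(-(t+ξ3))^2) + -(t+ξ3)))
        - F3/Real.sqrt (q+(-(t+ξ3))^2)) t := by
  have hw : 0 < -(t+ξ3) := by linarith
  have h0 : (0:ℝ) < q+(-(t+ξ3))^2 := by positivity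
  have hrpos : 0 < Real.sqrt (q+(-(t+ξ3))^2) := Real.sqrt_pos.2 h0
  have hspos : 0 < Real.sqrt (q+(-(t+ξ3))^2) + -(t+ξ3) := by linarith
  have hr := hasDerivAt_R3 ξ3 q hq t ht
  have hwd : HasDerivAt (fun s : ℝ => -(s+ξ3)) (-1) t := by
    exact ((hasDerivAt_id t).add_const ξ3).neg
  have hden : HasDerivAt (fun s : ℝ => Real.sqrt (q+(-(s+ξ3))^2) + -(s+ξ3))
      (-(-(t+ξ3))/Real.sqrt (q+(-(t+ξ3))^2) + -1) t := hr.add hwd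
  have h1 := (hasDerivAt_const t M).div hden (ne_of_gt hspos)
  have h2 := (hden.log (ne_of_gt hspos)).const_mul F3
  exact (h1.add h2).congr_deriv
    (alg1 M F3 (-(t+ξ3)) (Real.sqrt (q+(-(t+ξ3))^2)) hrpos hspos)

lemma slice3D2 (M F3 ξ3 q : ℝ) (hq : 0 ≤ q) (x : ℝ) (hx : x + ξ3 < 0) :
    HasDerivAt (fun t : ℝ => M/(Real.sqrt (q+(-(t+ξ3))^2)*(Real.sqrt (q+(-(t+ξ3))^2) + -(t+ξ3)))
        - F3/Real.sqrt (q+(-(t+ξ3))^2))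
      ((M - F3 * -(x+ξ3))/Real.sqrt (q+(-(x+ξ3))^2)^3) x := by
  have hw : 0 < -(x+ξ3) := by linarith
  have h0 : (0:ℝ) < q+(-(x+ξ3))^2 := by positivity
  have hrpos : 0 < Real.sqrt (q+(-(x+ξ3))^2) := Real.sqrt_pos.2 h0
  have hspos : 0 < Real.sqrt (q+(-(x+ξ3))^2) + -(x+ξ3) := by linarith
  have hr := hasDerivAt_R3 ξ3 q hq x hx
  have hwd : HasDerivAt (fun s : ℝ => -(s+ξ3)) (-1) x := by
    exact ((hasDerivAt_id x).add_const ξ3).neg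
  have hden : HasDerivAt (fun s : ℝ => Real.sqrt (q+(-(s+ξ3))^2) + -(s+ξ3))
      (-(-(x+ξ3))/Real.sqrt (q+(-(x+ξ3))^2) + -1) x := hr.add hwd
  have hden2 := hr.mul hden
  have h1 := (hasDerivAt_const x M).div hden2 (mul_pos hrpos hspos).ne'
  have h2 := (hasDerivAt_const x F3).div hr (ne_of_gt hrpos)
  exact (h1.sub h2).congr_deriv
    (alg2 M F3 (-(x+ξ3)) (Real.sqrt (q+(-(x+ξ3))^2)) hrpos hspos)

lemma algSum (F1 F2 F3 a b c r : ℝ) (hr : 0 < r) (hc : 0 < c)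
    (hr2 : r^2 = a^2+b^2+c^2) :
    (-(3*F1*a+F2*b)*r^2*(r+c) + (F1*a+F2*b)*a^2*((r+c)+2*r)
        + F3*(r+c)*(r^2*(r+c) - a^2*((r+c)+r)))/(r^3*(r+c)^3)
    + (-(3*F2*b+F1*a)*r^2*(r+c) + (F2*b+F1*a)*b^2*((r+c)+2*r)
        + F3*(r+c)*(r^2*(r+c) - b^2*((r+c)+r)))/(r^3*(r+c)^3)
    + ((F1*a+F2*b) - F3*c)/r^3 = 0 := by
  have hs : 0 < r + c := by linarith
  rw [← add_div, div_add_div _ _ (by positivity) (by positivity),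
    div_eq_zero_iff]
  left
  linear_combination (-(r^3*((F1*a+F2*b)*(3*r+c) - F3*(r+c)*(2*r+c)))) * hr2

/-- The scalar potential of the B image,
`Φ_ℬ(x1,x2,x3) = F1·R1/(R+R3) + F2·R2/(R+R3) + F3·log(R+R3)`, in the image
coordinates `R1 = x1−ξ1`, `R2 = x2−ξ2`, `R3 = −(x3+ξ3)`, `R = sqrt(R1²+R2²+R3²)`. -/
noncomputable def PhiB (F1 F2 F3 ξ1 ξ2 ξ3 x1 x2 x3 : ℝ) : ℝ :=
  let R1 := x1 - ξ1
  let R2 := x2 - ξ2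
  let R3 := -(x3 + ξ3)
  let R := Real.sqrt (R1 ^ 2 + R2 ^ 2 + R3 ^ 2)
  F1 * R1 / (R + R3) + F2 * R2 / (R + R3) + F3 * Real.log (R + R3)

/-- `Φ_ℬ` is smooth and harmonic on the open lower half-space `{x3 < 0}`. -/
theorem PhiB_smooth_harmonic (F1 F2 F3 ξ1 ξ2 ξ3 : ℝ) (hξ : ξ3 < 0) :
    ContDiffOn ℝ (⊤ : ℕ∞)
      (fun p : ℝ × ℝ × ℝ => PhiB F1 F2 F3 ξ1 ξ2 ξ3 p.1 p.2.1 p.2.2)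
      {p : ℝ × ℝ × ℝ | p.2.2 < 0} ∧
    ∀ x1 x2 x3 : ℝ, x3 < 0 →
      deriv (fun t => deriv (fun s => PhiB F1 F2 F3 ξ1 ξ2 ξ3 s x2 x3) t) x1
        + deriv (fun t => deriv (fun s => PhiB F1 F2 F3 ξ1 ξ2 ξ3 x1 s x3) t) x2
        + deriv (fun t => deriv (fun s => PhiB F1 F2 F3 ξ1 ξ2 ξ3 x1 x2 s) t) x3
        = 0 := by
  constructor
  · -- smoothness
    intro p hp
    have hp' : p.2.2 < 0 := hp
    have hc : 0 < -(p.2.2+ξ3) := by linarith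
    have harg : (0:ℝ) < (p.1-ξ1)^2+(p.2.1-ξ2)^2+(-(p.2.2+ξ3))^2 :=
      add_pos_of_nonneg_of_pos (by positivity) (pow_pos hc 2)
    have h1 : ContDiffAt ℝ (⊤ : ℕ∞)
        (fun q : ℝ×ℝ×ℝ => (q.1-ξ1)^2+(q.2.1-ξ2)^2+(-(q.2.2+ξ3))^2) p := by fun_prop
    have h2 : ContDiffAt ℝ (⊤ : ℕ∞)
        (fun q : ℝ×ℝ×ℝ => Real.sqrt ((q.1-ξ1)^2+(q.2.1-ξ2)^2+(-(q.2.2+ξ3))^2)) p :=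
      (Real.contDiffAt_sqrt harg.ne').comp p h1
    have h3 : ContDiffAt ℝ (⊤ : ℕ∞)
        (fun q : ℝ×ℝ×ℝ => Real.sqrt ((q.1-ξ1)^2+(q.2.1-ξ2)^2+(-(q.2.2+ξ3))^2)
          + -(q.2.2+ξ3)) p := h2.add (by fun_prop)
    have hS : 0 < Real.sqrt ((p.1-ξ1)^2+(p.2.1-ξ2)^2+(-(p.2.2+ξ3))^2) + -(p.2.2+ξ3) := by
      have := Real.sqrt_nonneg ((p.1-ξ1)^2+(p.2.1-ξ2)^2+(-(p.2.2+ξ3))^2)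
      linarith
    have h4 : ContDiffAt ℝ (⊤ : ℕ∞)
        (fun q : ℝ×ℝ×ℝ => Real.log (Real.sqrt ((q.1-ξ1)^2+(q.2.1-ξ2)^2+(-(q.2.2+ξ3))^2)
          + -(q.2.2+ξ3))) p := h3.log hS.ne'
    refine ContDiffAt.contDiffWithinAt ?_
    have hgoal : ContDiffAt ℝ (⊤ : ℕ∞) (fun q : ℝ×ℝ×ℝ =>
        F1*(q.1-ξ1)/(Real.sqrt ((q.1-ξ1)^2+(q.2.1-ξ2)^2+(-(q.2.2+ξ3))^2) + -(q.2.2+ξ3))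
        + F2*(q.2.1-ξ2)/(Real.sqrt ((q.1-ξ1)^2+(q.2.1-ξ2)^2+(-(q.2.2+ξ3))^2) + -(q.2.2+ξ3))
        + F3*Real.log (Real.sqrt ((q.1-ξ1)^2+(q.2.1-ξ2)^2+(-(q.2.2+ξ3))^2) + -(q.2.2+ξ3))) p := by
      exact (((by fun_prop : ContDiffAt ℝ (⊤ : ℕ∞) (fun q : ℝ×ℝ×ℝ => F1*(q.1-ξ1)) p).div h3
          hS.ne').add ((by fun_prop : ContDiffAt ℝ (⊤ : ℕ∞) (fun q : ℝ×ℝ×ℝ => F2*(q.2.1-ξ2)) p).div h3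
          hS.ne')).add (contDiffAt_const.mul h4)
    exact hgoal.congr_of_eventuallyEq (by filter_upwards with q; simp only [PhiB])
  · -- harmonicity
    intro x1 x2 x3 hx3
    have hc : 0 < -(x3+ξ3) := by linarith
    have hq1 : (0:ℝ) < ((x2-ξ2)^2+(-(x3+ξ3))^2) := add_pos_of_nonneg_of_pos (sq_nonneg _) (pow_pos hc 2)
    have hq2 : (0:ℝ) < ((x1-ξ1)^2+(-(x3+ξ3))^2) := add_pos_of_nonneg_of_pos (sq_nonneg _) (pow_pos hc 2)
    have hq3 : (0:ℝ) ≤ ((x1-ξ1)^2+(x2-ξ2)^2) := by positivity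
    have e1 : (fun s => PhiB F1 F2 F3 ξ1 ξ2 ξ3 s x2 x3) = (fun s : ℝ => F1*(s-ξ1)/(Real.sqrt ((s-ξ1)^2+((x2-ξ2)^2+(-(x3+ξ3))^2))+-(x3+ξ3)) + F2*(x2-ξ2)/(Real.sqrt ((s-ξ1)^2+((x2-ξ2)^2+(-(x3+ξ3))^2))+-(x3+ξ3)) + F3*Real.log (Real.sqrt ((s-ξ1)^2+((x2-ξ2)^2+(-(x3+ξ3))^2))+-(x3+ξ3))) := by
      funext t
      simp only [PhiB]
      rw [show (t-ξ1)^2+(x2-ξ2)^2+(-(x3+ξ3))^2 = (t-ξ1)^2+((x2-ξ2)^2+(-(x3+ξ3))^2) from by ring]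
    have e2 : (fun s => PhiB F1 F2 F3 ξ1 ξ2 ξ3 x1 s x3) = (fun s : ℝ => F2*(s-ξ2)/(Real.sqrt ((s-ξ2)^2+((x1-ξ1)^2+(-(x3+ξ3))^2))+-(x3+ξ3)) + F1*(x1-ξ1)/(Real.sqrt ((s-ξ2)^2+((x1-ξ1)^2+(-(x3+ξ3))^2))+-(x3+ξ3)) + F3*Real.log (Real.sqrt ((s-ξ2)^2+((x1-ξ1)^2+(-(x3+ξ3))^2))+-(x3+ξ3))) := by
      funext t
      simp only [PhiB]
      rw [show (x1-ξ1)^2+(t-ξ2)^2+(-(x3+ξ3))^2 = (t-ξ2)^2+((x1-ξ1)^2+(-(x3+ξ3))^2) from by ring]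
      ring
    have e3 : (fun t => PhiB F1 F2 F3 ξ1 ξ2 ξ3 x1 x2 t)
        = (fun t : ℝ => (F1*(x1-ξ1)+F2*(x2-ξ2))/(Real.sqrt (((x1-ξ1)^2+(x2-ξ2)^2)+(-(t+ξ3))^2) + -(t+ξ3)) + F3*Real.log (Real.sqrt (((x1-ξ1)^2+(x2-ξ2)^2)+(-(t+ξ3))^2) + -(t+ξ3))) := by
      funext t
      simp only [PhiB]
      ring
    have T1 : deriv (fun t => deriv (fun s => PhiB F1 F2 F3 ξ1 ξ2 ξ3 s x2 x3) t) x1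
        = (-(3*F1*(x1-ξ1)+F2*(x2-ξ2))*Real.sqrt ((x1-ξ1)^2+((x2-ξ2)^2+(-(x3+ξ3))^2))^2*(Real.sqrt ((x1-ξ1)^2+((x2-ξ2)^2+(-(x3+ξ3))^2))+-(x3+ξ3)) + (F1*(x1-ξ1)+F2*(x2-ξ2))*(x1-ξ1)^2*((Real.sqrt ((x1-ξ1)^2+((x2-ξ2)^2+(-(x3+ξ3))^2))+-(x3+ξ3))+2*Real.sqrt ((x1-ξ1)^2+((x2-ξ2)^2+(-(x3+ξ3))^2))) + F3*(Real.sqrt ((x1-ξ1)^2+((x2-ξ2)^2+(-(x3+ξ3))^2))+-(x3+ξ3))*(Real.sqrt ((x1-ξ1)^2+((x2-ξ2)^2+(-(x3+ξ3))^2))^2*(Real.sqrt ((x1-ξ1)^2+((x2-ξ2)^2+(-(x3+ξ3))^2))+-(x3+ξ3)) - (x1-ξ1)^2*((Real.sqrt ((x1-ξ1)^2+((x2-ξ2)^2+(-(x3+ξ3))^2))+-(x3+ξ3))+Real.sqrt ((x1-ξ1)^2+((x2-ξ2)^2+(-(x3+ξ3))^2)))))/(Real.sqrt ((x1-ξ1)^2+((x2-ξ2)^2+(-(x3+ξ3))^2))^3*(Real.sqrt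 ((x1-ξ1)^2+((x2-ξ2)^2+(-(x3+ξ3))^2))+-(x3+ξ3))^3) := by
      have h : (fun t => deriv (fun s => PhiB F1 F2 F3 ξ1 ξ2 ξ3 s x2 x3) t)
          = (fun t : ℝ => F1/(Real.sqrt ((t-ξ1)^2+((x2-ξ2)^2+(-(x3+ξ3))^2))+-(x3+ξ3)) - (F1*(t-ξ1)+F2*(x2-ξ2))*(t-ξ1)/(Real.sqrt ((t-ξ1)^2+((x2-ξ2)^2+(-(x3+ξ3))^2))*(Real.sqrt ((t-ξ1)^2+((x2-ξ2)^2+(-(x3+ξ3))^2))+-(x3+ξ3))^2) + F3*(t-ξ1)/(Real.sqrt ((t-ξ1)^2+((x2-ξ2)^2+(-(x3+ξ3))^2))*(Real.sqrt ((t-ξ1)^2+((x2-ξ2)^2+(-(x3+ξ3))^2))+-(x3+ξ3)))) := by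
        funext t
        rw [e1]
        exact (sliceD1 F1 F3 ξ1 (F2*(x2-ξ2)) ((x2-ξ2)^2+(-(x3+ξ3))^2) (-(x3+ξ3)) hq1 hc t).deriv
      rw [h]
      exact (sliceD2 F1 F3 ξ1 (F2*(x2-ξ2)) ((x2-ξ2)^2+(-(x3+ξ3))^2) (-(x3+ξ3)) hq1 hc x1).deriv
    have T2 : deriv (fun t => deriv (fun s => PhiB F1 F2 F3 ξ1 ξ2 ξ3 x1 s x3) t) x2
        = (-(3*F2*(x2-ξ2)+F1*(x1-ξ1))*Real.sqrt ((x2-ξ2)^2+((x1-ξ1)^2+(-(x3+ξ3))^2))^2*(Real.sqrt ((x2-ξ2)^2+((x1-ξ1)^2+(-(x3+ξ3))^2))+-(x3+ξ3)) + (F2*(x2-ξ2)+F1*(x1-ξ1))*(x2-ξ2)^2*((Real.sqrt ((x2-ξ2)^2+((x1-ξ1)^2+(-(x3+ξ3))^2))+-(x3+ξ3))+2*Real.sqrt ((x2-ξ2)^2+((x1-ξ1)^2+(-(x3+ξ3))^2))) + F3*(Real.sqrt ((x2-ξ2)^2+((x1-ξ1)^2+(-(x3+ξ3))^2))+-(x3+ξ3))*(Real.sqrt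 ((x2-ξ2)^2+((x1-ξ1)^2+(-(x3+ξ3))^2))^2*(Real.sqrt ((x2-ξ2)^2+((x1-ξ1)^2+(-(x3+ξ3))^2))+-(x3+ξ3)) - (x2-ξ2)^2*((Real.sqrt ((x2-ξ2)^2+((x1-ξ1)^2+(-(x3+ξ3))^2))+-(x3+ξ3))+Real.sqrt ((x2-ξ2)^2+((x1-ξ1)^2+(-(x3+ξ3))^2)))))/(Real.sqrt ((x2-ξ2)^2+((x1-ξ1)^2+(-(x3+ξ3))^2))^3*(Real.sqrt ((x2-ξ2)^2+((x1-ξ1)^2+(-(x3+ξ3))^2))+-(x3+ξ3))^3) := by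
      have h : (fun t => deriv (fun s => PhiB F1 F2 F3 ξ1 ξ2 ξ3 x1 s x3) t)
          = (fun t : ℝ => F2/(Real.sqrt ((t-ξ2)^2+((x1-ξ1)^2+(-(x3+ξ3))^2))+-(x3+ξ3)) - (F2*(t-ξ2)+F1*(x1-ξ1))*(t-ξ2)/(Real.sqrt ((t-ξ2)^2+((x1-ξ1)^2+(-(x3+ξ3))^2))*(Real.sqrt ((t-ξ2)^2+((x1-ξ1)^2+(-(x3+ξ3))^2))+-(x3+ξ3))^2) + F3*(t-ξ2)/(Real.sqrt ((t-ξ2)^2+((x1-ξ1)^2+(-(x3+ξ3))^2))*(Real.sqrt ((t-ξ2)^2+((x1-ξ1)^2+(-(x3+ξ3))^2))+-(x3+ξ3)))) := by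
        funext t
        rw [e2]
        exact (sliceD1 F2 F3 ξ2 (F1*(x1-ξ1)) ((x1-ξ1)^2+(-(x3+ξ3))^2) (-(x3+ξ3)) hq2 hc t).deriv
      rw [h]
      exact (sliceD2 F2 F3 ξ2 (F1*(x1-ξ1)) ((x1-ξ1)^2+(-(x3+ξ3))^2) (-(x3+ξ3)) hq2 hc x2).deriv
    have T3 : deriv (fun t => deriv (fun s => PhiB F1 F2 F3 ξ1 ξ2 ξ3 x1 x2 s) t) x3
        = ((F1*(x1-ξ1)+F2*(x2-ξ2)) - F3 * -(x3+ξ3))/Real.sqrt (((x1-ξ1)^2+(x2-ξ2)^2)+(-(x3+ξ3))^2)^3 := by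
      have hev : (fun t => deriv (fun s => PhiB F1 F2 F3 ξ1 ξ2 ξ3 x1 x2 s) t)
          =ᶠ[nhds x3] (fun t : ℝ => (F1*(x1-ξ1)+F2*(x2-ξ2))/(Real.sqrt (((x1-ξ1)^2+(x2-ξ2)^2)+(-(t+ξ3))^2)*(Real.sqrt (((x1-ξ1)^2+(x2-ξ2)^2)+(-(t+ξ3))^2) + -(t+ξ3))) - F3/Real.sqrt (((x1-ξ1)^2+(x2-ξ2)^2)+(-(t+ξ3))^2)) := by
        filter_upwards [Iio_mem_nhds (show x3 < -ξ3 by linarith)] with t ht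
        rw [e3]
        exact (slice3D1 (F1*(x1-ξ1)+F2*(x2-ξ2)) F3 ξ3 ((x1-ξ1)^2+(x2-ξ2)^2) hq3 t (by simp only [Set.mem_Iio] at ht; linarith)).deriv
      rw [hev.deriv_eq]
      exact (slice3D2 (F1*(x1-ξ1)+F2*(x2-ξ2)) F3 ξ3 ((x1-ξ1)^2+(x2-ξ2)^2) hq3 x3 (by linarith)).deriv
    rw [T1, T2, T3]
    rw [show (x1-ξ1)^2+((x2-ξ2)^2+(-(x3+ξ3))^2) = (x1-ξ1)^2+(x2-ξ2)^2+(-(x3+ξ3))^2 from by ring,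
        show (x2-ξ2)^2+((x1-ξ1)^2+(-(x3+ξ3))^2) = (x1-ξ1)^2+(x2-ξ2)^2+(-(x3+ξ3))^2 from by ring]
    have hargpos : (0:ℝ) < (x1-ξ1)^2+(x2-ξ2)^2+(-(x3+ξ3))^2 :=
      add_pos_of_nonneg_of_pos (by positivity) (pow_pos hc 2)
    have hrpos : 0 < Real.sqrt ((x1-ξ1)^2+(x2-ξ2)^2+(-(x3+ξ3))^2) := Real.sqrt_pos.2 hargpos
    have hr2 : Real.sqrt ((x1-ξ1)^2+(x2-ξ2)^2+(-(x3+ξ3))^2)^2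
        = (x1-ξ1)^2+(x2-ξ2)^2+(-(x3+ξ3))^2 := Real.sq_sqrt (le_of_lt hargpos)
    exact algSum F1 F2 F3 (x1-ξ1) (x2-ξ2) (-(x3+ξ3))
      (Real.sqrt ((x1-ξ1)^2+(x2-ξ2)^2+(-(x3+ξ3))^2)) hrpos hc hr2
end

section
/- Fix (F1,F2,F3) ∈ ℝ³ and a source (ξ1,ξ2,ξ3) with ξ3 < 0. With R1 = x1−ξ1, R2 = x2−ξ2, R3 = −(x3+ξ3), R = sqrt(R1^2+R2^2+R3^2), define Φ_ℬ(x1,x2,x3) = F1·R1/(R+R3) + F2·R2/(R+R3) + F3·log(R+R3) on the open lower half-space {x3 < 0}. Then the second partial derivative of Φ_ℬ with respect to x3 satisfies ∂²Φ_ℬ/∂x3² = F1·R1/R³ + F2·R2/R³ − F3·R3/R³, i.e. ∂²Φ_ℬ/∂x3² equals the dipole potential F·∇_ξ̄(1/R) of the image source; so Φ_ℬ is a second x3-antiderivative of a standard Newtonian dipole field, and its multipole expansion is obtained from the standard dipole multipole expansion by applying ∂_{x3}^{−2}. -/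
private lemma aux_p_le_r (c1 c2 p : ℝ) (hp : 0 < p) :
    p ≤ Real.sqrt (c1 ^ 2 + c2 ^ 2 + p ^ 2) := by
  have h := Real.sqrt_le_sqrt (show p ^ 2 ≤ c1 ^ 2 + c2 ^ 2 + p ^ 2 by nlinarith)
  rwa [Real.sqrt_sq hp.le] at h

private lemma hasDerivAt_r (c1 c2 ξ3 t : ℝ) (ht : t + ξ3 < 0) :
    HasDerivAt (fun s : ℝ => Real.sqrt (c1 ^ 2 + c2 ^ 2 + (-(s + ξ3)) ^ 2))
      ((t + ξ3) / Real.sqrt (c1 ^ 2 + c2 ^ 2 + (-(t + ξ3)) ^ 2)) t := by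
  have hp : 0 < -(t + ξ3) := by linarith
  have hq : 0 < c1 ^ 2 + c2 ^ 2 + (-(t + ξ3)) ^ 2 := by positivity
  have hq' : HasDerivAt (fun s : ℝ => c1 ^ 2 + c2 ^ 2 + (-(s + ξ3)) ^ 2) (2 * (t + ξ3)) t := by
    have h1 : HasDerivAt (fun s : ℝ => -(s + ξ3)) (-1) t := by
      exact ((hasDerivAt_id t).add_const ξ3).neg
    have h2 := (h1.pow 2).const_add (c1 ^ 2 + c2 ^ 2)
    refine h2.congr_deriv ?_
    ring
  have h := (Real.hasDerivAt_sqrt hq.ne').comp t hq'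
  have hr : 0 < Real.sqrt (c1 ^ 2 + c2 ^ 2 + (-(t + ξ3)) ^ 2) := Real.sqrt_pos.mpr hq
  rw [show (1 : ℝ) / (2 * Real.sqrt (c1 ^ 2 + c2 ^ 2 + (-(t + ξ3)) ^ 2)) * (2 * (t + ξ3))
      = (t + ξ3) / Real.sqrt (c1 ^ 2 + c2 ^ 2 + (-(t + ξ3)) ^ 2) from by
    rw [div_mul_eq_mul_div, one_mul,
      mul_div_mul_left _ _ (by norm_num : (2:ℝ) ≠ 0)]] at h
  exact h

/-- first `x3`-derivative of `Φ_ℬ` -/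
private lemma hasDerivAt_PhiB (F1 F2 F3 ξ1 ξ2 ξ3 x1 x2 t : ℝ) (ht : t + ξ3 < 0) :
    HasDerivAt (fun s => PhiB F1 F2 F3 ξ1 ξ2 ξ3 x1 x2 s)
      ((F1 * (x1 - ξ1) + F2 * (x2 - ξ2)) /
          (Real.sqrt ((x1 - ξ1) ^ 2 + (x2 - ξ2) ^ 2 + (-(t + ξ3)) ^ 2) *
            (Real.sqrt ((x1 - ξ1) ^ 2 + (x2 - ξ2) ^ 2 + (-(t + ξ3)) ^ 2) + -(t + ξ3)))
        - F3 / Real.sqrt ((x1 - ξ1) ^ 2 + (x2 - ξ2) ^ 2 + (-(t + ξ3)) ^ 2)) t := by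
  set c1 := x1 - ξ1
  set c2 := x2 - ξ2
  have hp : 0 < -(t + ξ3) := by linarith
  have hq : 0 < c1 ^ 2 + c2 ^ 2 + (-(t + ξ3)) ^ 2 := by positivity
  set r := Real.sqrt (c1 ^ 2 + c2 ^ 2 + (-(t + ξ3)) ^ 2) with hrdef
  have hr : 0 < r := Real.sqrt_pos.mpr hq
  have hpr : -(t + ξ3) ≤ r := aux_p_le_r c1 c2 _ hp
  have hrp : 0 < r + -(t + ξ3) := by linarith
  have hr' := hasDerivAt_r c1 c2 ξ3 t ht
  have hp' : HasDerivAt (fun s : ℝ => -(s + ξ3)) (-1) t := by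
    exact ((hasDerivAt_id t).add_const ξ3).neg
  have hrp' : HasDerivAt (fun s : ℝ =>
      Real.sqrt (c1 ^ 2 + c2 ^ 2 + (-(s + ξ3)) ^ 2) + -(s + ξ3))
      ((t + ξ3) / r + -1) t := hr'.add hp'
  have h1 : HasDerivAt (fun s : ℝ =>
      F1 * c1 / (Real.sqrt (c1 ^ 2 + c2 ^ 2 + (-(s + ξ3)) ^ 2) + -(s + ξ3)))
      ((0 * (r + -(t + ξ3)) - F1 * c1 * ((t + ξ3) / r + -1)) / (r + -(t + ξ3)) ^ 2) t :=
    (hasDerivAt_const t (F1 * c1)).div hrp' hrp.ne'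
  have h2 : HasDerivAt (fun s : ℝ =>
      F2 * c2 / (Real.sqrt (c1 ^ 2 + c2 ^ 2 + (-(s + ξ3)) ^ 2) + -(s + ξ3)))
      ((0 * (r + -(t + ξ3)) - F2 * c2 * ((t + ξ3) / r + -1)) / (r + -(t + ξ3)) ^ 2) t :=
    (hasDerivAt_const t (F2 * c2)).div hrp' hrp.ne'
  have h3 : HasDerivAt (fun s : ℝ =>
      F3 * Real.log (Real.sqrt (c1 ^ 2 + c2 ^ 2 + (-(s + ξ3)) ^ 2) + -(s + ξ3)))
      (F3 * (((t + ξ3) / r + -1) / (r + -(t + ξ3)))) t :=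
    (hrp'.log hrp.ne').const_mul F3
  have h := (h1.add h2).add h3
  have heq : (fun s => PhiB F1 F2 F3 ξ1 ξ2 ξ3 x1 x2 s) = fun s : ℝ =>
      F1 * c1 / (Real.sqrt (c1 ^ 2 + c2 ^ 2 + (-(s + ξ3)) ^ 2) + -(s + ξ3)) +
      F2 * c2 / (Real.sqrt (c1 ^ 2 + c2 ^ 2 + (-(s + ξ3)) ^ 2) + -(s + ξ3)) +
      F3 * Real.log (Real.sqrt (c1 ^ 2 + c2 ^ 2 + (-(s + ξ3)) ^ 2) + -(s + ξ3)) := by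
    funext s
    simp only [PhiB]
    rfl
  rw [heq]
  refine h.congr_deriv ?_
  obtain ⟨p, hpdef⟩ : ∃ p : ℝ, p = -(t + ξ3) := ⟨_, rfl⟩
  have h7 : r + p ≠ 0 := by rw [hpdef]; exact hrp.ne'
  rw [← hpdef, show t + ξ3 = -p from by rw [hpdef]; ring]
  field_simp [hr.ne', h7]
  ring

/-- `∂²Φ_ℬ/∂x3² = F1·R1/R³ + F2·R2/R³ − F3·R3/R³`, i.e. the second `x3`-derivative
of `Φ_ℬ` is the Newtonian dipole potential `F·∇_ξ̄(1/R)` of the image source. -/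
theorem PhiB_second_x3_derivative (F1 F2 F3 ξ1 ξ2 ξ3 : ℝ) (hξ : ξ3 < 0) :
    ∀ x1 x2 x3 : ℝ, x3 < 0 →
      ∀ R1 R2 R3 R : ℝ, R1 = x1 - ξ1 → R2 = x2 - ξ2 → R3 = -(x3 + ξ3) →
        R = Real.sqrt (R1 ^ 2 + R2 ^ 2 + R3 ^ 2) →
        deriv (fun t => deriv (fun s => PhiB F1 F2 F3 ξ1 ξ2 ξ3 x1 x2 s) t) x3
          = F1 * R1 / R ^ 3 + F2 * R2 / R ^ 3 - F3 * R3 / R ^ 3 := by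
  intro x1 x2 x3 hx3 R1 R2 R3 R hR1 hR2 hR3 hR
  subst hR1 hR2 hR3 hR
  set c1 := x1 - ξ1
  set c2 := x2 - ξ2
  set D1 : ℝ → ℝ := fun t =>
      (F1 * c1 + F2 * c2) /
          (Real.sqrt (c1 ^ 2 + c2 ^ 2 + (-(t + ξ3)) ^ 2) *
            (Real.sqrt (c1 ^ 2 + c2 ^ 2 + (-(t + ξ3)) ^ 2) + -(t + ξ3)))
        - F3 / Real.sqrt (c1 ^ 2 + c2 ^ 2 + (-(t + ξ3)) ^ 2) with hD1
  have hx3' : x3 + ξ3 < 0 := by linarith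
  have hev : (fun t => deriv (fun s => PhiB F1 F2 F3 ξ1 ξ2 ξ3 x1 x2 s) t) =ᶠ[nhds x3] D1 := by
    filter_upwards [Iio_mem_nhds (show x3 < -ξ3 by linarith)] with t ht
    exact (hasDerivAt_PhiB F1 F2 F3 ξ1 ξ2 ξ3 x1 x2 t
      (by simp only [Set.mem_Iio] at ht; linarith)).deriv
  rw [hev.deriv_eq]
  have hp : 0 < -(x3 + ξ3) := by linarith
  have hq : 0 < c1 ^ 2 + c2 ^ 2 + (-(x3 + ξ3)) ^ 2 := by positivity
  set r := Real.sqrt (c1 ^ 2 + c2 ^ 2 + (-(x3 + ξ3)) ^ 2) with hrdef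
  have hr : 0 < r := Real.sqrt_pos.mpr hq
  have hpr : -(x3 + ξ3) ≤ r := aux_p_le_r c1 c2 _ hp
  have hrp : 0 < r + -(x3 + ξ3) := by linarith
  have hr' := hasDerivAt_r c1 c2 ξ3 x3 hx3'
  have hp' : HasDerivAt (fun s : ℝ => -(s + ξ3)) (-1) x3 := by
    exact ((hasDerivAt_id x3).add_const ξ3).neg
  have hrp' : HasDerivAt (fun s : ℝ =>
      Real.sqrt (c1 ^ 2 + c2 ^ 2 + (-(s + ξ3)) ^ 2) + -(s + ξ3))
      ((x3 + ξ3) / r + -1) x3 := hr'.add hp'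
  have hg : HasDerivAt (fun s : ℝ =>
      Real.sqrt (c1 ^ 2 + c2 ^ 2 + (-(s + ξ3)) ^ 2) *
        (Real.sqrt (c1 ^ 2 + c2 ^ 2 + (-(s + ξ3)) ^ 2) + -(s + ξ3)))
      ((x3 + ξ3) / r * (r + -(x3 + ξ3)) + r * ((x3 + ξ3) / r + -1)) x3 := hr'.mul hrp'
  have hgne : r * (r + -(x3 + ξ3)) ≠ 0 := by positivity
  have h1 : HasDerivAt (fun s : ℝ =>
      (F1 * c1 + F2 * c2) /
        (Real.sqrt (c1 ^ 2 + c2 ^ 2 + (-(s + ξ3)) ^ 2) *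
          (Real.sqrt (c1 ^ 2 + c2 ^ 2 + (-(s + ξ3)) ^ 2) + -(s + ξ3))))
      ((0 * (r * (r + -(x3 + ξ3))) - (F1 * c1 + F2 * c2) *
          ((x3 + ξ3) / r * (r + -(x3 + ξ3)) + r * ((x3 + ξ3) / r + -1))) /
        (r * (r + -(x3 + ξ3))) ^ 2) x3 :=
    (hasDerivAt_const x3 (F1 * c1 + F2 * c2)).div hg hgne
  have h2 : HasDerivAt (fun s : ℝ =>
      F3 / Real.sqrt (c1 ^ 2 + c2 ^ 2 + (-(s + ξ3)) ^ 2))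
      ((0 * r - F3 * ((x3 + ξ3) / r)) / r ^ 2) x3 :=
    (hasDerivAt_const x3 F3).div hr' hr.ne'
  have h := (h1.sub h2).deriv
  rw [hD1]
  refine h.trans ?_
  obtain ⟨p, hpdef⟩ : ∃ p : ℝ, p = -(x3 + ξ3) := ⟨_, rfl⟩
  have h7 : r + p ≠ 0 := by rw [hpdef]; exact hrp.ne'
  rw [← hpdef, show x3 + ξ3 = -p from by rw [hpdef]; ring]
  field_simp [hr.ne', h7]
  ring
end
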